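/- Let A ∈ ℝ^{n×n}. Suppose there exist positive scalars p_i and nonnegative scalars w_{ij}, v_{ij} (1 ≤ i,j ≤ n) such that for all i: -a_{ii} ≥ (w_{ii}+v_{ii})/(2p_i), for all j≠i: |a_{ij}| ≤ √(w_{ij} v_{ij})/p_i, and w_{ii} > Σ_{j≠i} w_{ij}, v_{ii} > Σ_{j≠i} v_{ji}. Then the comparison matrix M(A) (with M(A)_{ii} = -max(-a_{ii},0), M(A)_{ij} = |a_{ij}|) is Hurwitz. -/

import Mathlib

open Matrix Finset

/-- `A` is Hurwitz: every complex eigenvalue has negative real part. -/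
def IsHurwitz {n : Type*} [Fintype n] [DecidableEq n] (A : Matrix n n ℝ) : Prop :=
  ∀ μ ∈ spectrum ℂ (A.map (algebraMap ℝ ℂ)), μ.re < 0

/-- The comparison matrix of `A`. -/
def compMat {n : ℕ} (A : Matrix (Fin n) (Fin n) ℝ) : Matrix (Fin n) (Fin n) ℝ :=
  Matrix.of fun i j => if i = j then -max (-(A i i)) 0 else |A i j|

/-!
If `M(A) x = μ x` with `x ≠ 0`, pairing with `p ⊙ x̄` gives
`Re μ · ∑ pᵢ |xᵢ|² ≤ ∑ pᵢ M(A)ᵢⱼ yᵢ yⱼ` with `y = |x|`, because `M(A)` is Metzler.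
By AM-GM, `pᵢ |aᵢⱼ| yᵢ yⱼ ≤ √(wᵢⱼ vᵢⱼ) yᵢ yⱼ ≤ (wᵢⱼ yᵢ² + vᵢⱼ yⱼ²) / 2`, so the right side is
at most `½ ∑ᵢ (∑_{j≠i} wᵢⱼ - wᵢᵢ + ∑_{j≠i} vⱼᵢ - vᵢᵢ) yᵢ²`, which is negative by the diagonal
dominance of `w` (by rows) and of `v` (by columns).
-/

def Matrix.IsMetzler {ι : Type*} (B : Matrix ι ι ℝ) : Prop :=
  ∀ i j, i ≠ j → 0 ≤ B i j

theorem Matrix.exists_mulVec_eq_smul_of_mem_spectrum {K ι : Type*} [Field K] [Fintype ι]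
    [DecidableEq ι] {C : Matrix ι ι K} {μ : K} (hμ : μ ∈ spectrum K C) :
    ∃ x ≠ 0, C *ᵥ x = μ • x := by
  rw [← Matrix.spectrum_toLin', ← Module.End.hasEigenvalue_iff_mem_spectrum] at hμ
  obtain ⟨x, hx⟩ := hμ.exists_hasEigenvector
  exact ⟨x, hx.2, by simpa [Matrix.toLin'_apply] using hx.apply_eq_smul⟩

theorem re_star_mul_mulVec_map_ofReal {ι : Type*} [Fintype ι] (B : Matrix ι ι ℝ) (x : ι → ℂ)
    (i : ι) :
    (star (x i) * (B.map (algebraMap ℝ ℂ) *ᵥ x) i).re = ∑ j, B i j * (star (x i) * x j).re := by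
  simp only [mulVec, dotProduct, Finset.mul_sum, Complex.re_sum, map_apply]
  refine Finset.sum_congr rfl fun j _ => ?_
  rw [mul_left_comm]
  exact Complex.re_ofReal_mul _ _

theorem Matrix.IsMetzler.isHurwitz_of_weighted_form_neg {ι : Type*} [Fintype ι] [DecidableEq ι]
    {B : Matrix ι ι ℝ} (hB : B.IsMetzler)
    {p : ι → ℝ} (hp : 0 ≤ p)
    (hform : ∀ y : ι → ℝ, 0 ≤ y → y ≠ 0 → ∑ i, ∑ j, p i * B i j * (y i * y j) < 0) :
    IsHurwitz B := by
  intro μ hμ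
  obtain ⟨x, hx0, hx⟩ := exists_mulVec_eq_smul_of_mem_spectrum hμ
  set y : ι → ℝ := fun i => ‖x i‖
  have hy : y ≠ 0 := fun h => hx0 (funext fun i => norm_eq_zero.1 (congrFun h i))
  have hentry : ∀ i j, B i j * (star (x i) * x j).re ≤ B i j * (y i * y j) := by
    intro i j
    rcases eq_or_ne i j with rfl | hij
    · rw [Complex.star_def, Complex.conj_mul', ← sq]
      norm_cast
    · refine mul_le_mul_of_nonneg_left ?_ (hB i j hij)
      simpa [y] using Complex.re_le_norm (star (x i) * x j)
  have hbound : μ.re * ∑ i, p i * y i ^ 2 ≤ ∑ i, ∑ j, p i * B i j * (y i * y j) :=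
    calc μ.re * ∑ i, p i * y i ^ 2
        = ∑ i, p i * (star (x i) * (B.map (algebraMap ℝ ℂ) *ᵥ x) i).re := by
          rw [hx, Finset.mul_sum]
          refine Finset.sum_congr rfl fun i _ => ?_
          rw [Pi.smul_apply, smul_eq_mul, mul_left_comm (star (x i)), Complex.star_def,
            Complex.conj_mul', ← Complex.ofReal_pow, Complex.re_mul_ofReal, mul_left_comm]
      _ ≤ ∑ i, ∑ j, p i * B i j * (y i * y j) := by
          refine Finset.sum_le_sum fun i _ => ?_
          rw [re_star_mul_mulVec_map_ofReal, Finset.mul_sum]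
          refine Finset.sum_le_sum fun j _ => ?_
          rw [mul_assoc]
          exact mul_le_mul_of_nonneg_left (hentry i j) (hp i)
  by_contra! hre
  have : 0 ≤ μ.re * ∑ i, p i * y i ^ 2 :=
    mul_nonneg hre (Finset.sum_nonneg fun i _ => mul_nonneg (hp i) (sq_nonneg _))
  linarith [hform y (fun i => norm_nonneg (x i)) hy]

theorem Real.sqrt_mul_mul_le_add_div_two {w v : ℝ} (hw : 0 ≤ w) (hv : 0 ≤ v) (a b : ℝ) :
    √(w * v) * (a * b) ≤ (w * a ^ 2 + v * b ^ 2) / 2 := by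
  have hsq : 0 ≤ (√w * a - √v * b) ^ 2 := sq_nonneg _
  rw [Real.sqrt_mul hw]
  nlinarith [Real.sq_sqrt hw, Real.sq_sqrt hv]

theorem Finset.sum_ite_eq_add_sum_erase {ι M : Type*} [Fintype ι] [DecidableEq ι]
    [AddCommMonoid M] (i : ι) (a : M) (f : ι → M) :
    ∑ j, (if j = i then a else f j) = a + ∑ j ∈ univ.erase i, f j := by
  rw [← Finset.add_sum_erase _ _ (mem_univ i), if_pos rfl]
  congr 1
  exact Finset.sum_congr rfl fun j hj => if_neg (ne_of_mem_erase hj)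

theorem sum_mul_sq_neg {ι : Type*} [Fintype ι] {c y : ι → ℝ} (hc : ∀ i, c i < 0)
    (hy : y ≠ 0) : ∑ i, c i * y i ^ 2 < 0 := by
  obtain ⟨k, hk⟩ := Function.ne_iff.mp hy
  refine Finset.sum_neg' (fun i _ => mul_nonpos_of_nonpos_of_nonneg (hc i).le (sq_nonneg _))
    ⟨k, mem_univ k, mul_neg_of_neg_of_pos (hc k) (pow_two_pos_of_ne_zero hk)⟩

theorem sum_sum_add_neg {ι : Type*} [Fintype ι] {W V : ι → ι → ℝ}
    (hW : ∀ i, ∑ j, W i j < 0) (hV : ∀ j, ∑ i, V i j < 0) {y : ι → ℝ} (hy : y ≠ 0) :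
    ∑ i, ∑ j, (W i j * y i ^ 2 + V i j * y j ^ 2) < 0 := by
  have hrows : ∑ i, ∑ j, W i j * y i ^ 2 < 0 := by
    simpa only [← Finset.sum_mul] using sum_mul_sq_neg hW hy
  have hcols : ∑ i, ∑ j, V i j * y j ^ 2 < 0 := by
    rw [Finset.sum_comm]
    simpa only [← Finset.sum_mul] using sum_mul_sq_neg hV hy
  simpa only [Finset.sum_add_distrib] using add_neg hrows hcols

section Comparison

variable {n : ℕ} {A : Matrix (Fin n) (Fin n) ℝ}

theorem compMat_isMetzler (A : Matrix (Fin n) (Fin n) ℝ) : (compMat A).IsMetzler := by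
  intro i j hij
  simp [compMat, hij]

theorem mul_compMat_self_le {i : Fin n} {p c : ℝ} (hp : 0 < p) (h : -(A i i) ≥ c / (2 * p)) :
    p * compMat A i i ≤ -(c / 2) := by
  have hle : compMat A i i ≤ A i i := by simpa [compMat] using neg_le.mpr (le_max_left _ _)
  rw [ge_iff_le, div_le_iff₀ (by positivity)] at h
  nlinarith

theorem mul_compMat_le_of_ne {i j : Fin n} {p s : ℝ} (hp : 0 < p) (hij : i ≠ j)
    (h : |A i j| ≤ s / p) : p * compMat A i j ≤ s := by
  rw [le_div_iff₀ hp] at h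
  simpa [compMat, hij, mul_comm] using h

theorem compMat_weighted_form_neg (p : Fin n → ℝ) (w v : Fin n → Fin n → ℝ)
    (hp : ∀ i, 0 < p i) (hw : ∀ i j, 0 ≤ w i j) (hv : ∀ i j, 0 ≤ v i j)
    (hdiag : ∀ i, -(A i i) ≥ (w i i + v i i) / (2 * p i))
    (hoff : ∀ i j, j ≠ i → |A i j| ≤ √(w i j * v i j) / p i)
    (hwdom : ∀ i, w i i > ∑ j ∈ univ.erase i, w i j)
    (hvdom : ∀ i, v i i > ∑ j ∈ univ.erase i, v j i)
    {y : Fin n → ℝ} (hy0 : 0 ≤ y) (hy : y ≠ 0) :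
    ∑ i, ∑ j, p i * compMat A i j * (y i * y j) < 0 := by
  -- Moving `-wᵢᵢ`, `-vᵢᵢ` onto the diagonal turns the dominance hypotheses into negative
  -- row sums of `W` and negative column sums of `V`.
  set W : Fin n → Fin n → ℝ := fun i j => if j = i then -w i i else w i j
  set V : Fin n → Fin n → ℝ := fun i j => if i = j then -v j j else v i j
  have hW : ∀ i, ∑ j, W i j < 0 := fun i => by
    rw [Finset.sum_ite_eq_add_sum_erase]
    linarith [hwdom i]
  have hV : ∀ j, ∑ i, V i j < 0 := fun j => by
    rw [Finset.sum_ite_eq_add_sum_erase]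
    linarith [hvdom j]
  have hterm : ∀ i j,
      p i * compMat A i j * (y i * y j) ≤ (W i j * y i ^ 2 + V i j * y j ^ 2) / 2 := by
    intro i j
    rcases eq_or_ne i j with rfl | hij
    · have := mul_le_mul_of_nonneg_right (mul_compMat_self_le (hp i) (hdiag i))
        (mul_self_nonneg (y i))
      simp only [W, V, if_pos rfl]
      linarith
    · calc p i * compMat A i j * (y i * y j) ≤ √(w i j * v i j) * (y i * y j) :=
            mul_le_mul_of_nonneg_right (mul_compMat_le_of_ne (hp i) hij (hoff i j hij.symm))
              (mul_nonneg (hy0 i) (hy0 j))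
        _ ≤ (w i j * y i ^ 2 + v i j * y j ^ 2) / 2 :=
            Real.sqrt_mul_mul_le_add_div_two (hw i j) (hv i j) _ _
        _ = (W i j * y i ^ 2 + V i j * y j ^ 2) / 2 := by
            simp only [W, V, if_neg hij, if_neg hij.symm]
  calc ∑ i, ∑ j, p i * compMat A i j * (y i * y j)
      ≤ ∑ i, ∑ j, (W i j * y i ^ 2 + V i j * y j ^ 2) / 2 :=
        Finset.sum_le_sum fun i _ => Finset.sum_le_sum fun j _ => hterm i j
    _ = (∑ i, ∑ j, (W i j * y i ^ 2 + V i j * y j ^ 2)) / 2 := by simp only [Finset.sum_div]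
    _ < 0 := by linarith [sum_sum_add_neg hW hV hy]

end Comparison

theorem lin_cond_implies_comparison_hurwitz {n : ℕ} (A : Matrix (Fin n) (Fin n) ℝ)
    (p : Fin n → ℝ) (w v : Fin n → Fin n → ℝ)
    (hp : ∀ i, 0 < p i)
    (hw : ∀ i j, 0 ≤ w i j) (hv : ∀ i j, 0 ≤ v i j)
    (hdiag : ∀ i, -(A i i) ≥ (w i i + v i i) / (2 * p i))
    (hoff : ∀ i j, j ≠ i → |A i j| ≤ Real.sqrt (w i j * v i j) / p i)
    (hwdom : ∀ i, w i i > ∑ j ∈ Finset.univ.erase i, w i j)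
    (hvdom : ∀ i, v i i > ∑ j ∈ Finset.univ.erase i, v j i) :
    IsHurwitz (compMat A) :=
  (compMat_isMetzler A).isHurwitz_of_weighted_form_neg (fun i => (hp i).le) fun _ hy0 hy =>
    compMat_weighted_form_neg p w v hp hw hv hdiag hoff hwdom hvdom hy0 hy
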